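/- Let Λ_n be tail copulas of copulas C_n and Λ the tail copula of a copula C, with Λ_n → Λ pointwise on (0,∞)^d. If λ*(C) = sup_{b∈B} Λ(b) and λ*(C_n) = sup_{b∈B} Λ_n(b), where B = {b ∈ (0,∞)^d : ∏ b_j = 1}, then λ*(C_n) → λ*(C). -/

import Mathlib

open Filter Set

/-- A minimal axiomatization of a `d`-dimensional copula: a distribution function on
`[0,1]^d` with uniform margins, grounded, componentwise nondecreasing and
1-Lipschitz w.r.t. the ℓ¹-norm. -/
def IsCopula (d : ℕ) (C : (Fin d → ℝ) → ℝ) : Prop :=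
  (∀ u : Fin d → ℝ, (∀ j, u j ∈ Set.Icc (0:ℝ) 1) → 0 ≤ C u ∧ C u ≤ 1) ∧
  (∀ u : Fin d → ℝ, (∀ j, u j ∈ Set.Icc (0:ℝ) 1) → (∃ j, u j = 0) → C u = 0) ∧
  (∀ (j : Fin d) (x : ℝ), x ∈ Set.Icc (0:ℝ) 1 →
      C (fun i => if i = j then x else 1) = x) ∧
  (∀ u v : Fin d → ℝ, (∀ j, u j ∈ Set.Icc (0:ℝ) 1) → (∀ j, v j ∈ Set.Icc (0:ℝ) 1) →
      (∀ j, u j ≤ v j) → C u ≤ C v) ∧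
  (∀ u v : Fin d → ℝ, (∀ j, u j ∈ Set.Icc (0:ℝ) 1) → (∀ j, v j ∈ Set.Icc (0:ℝ) 1) →
      |C u - C v| ≤ ∑ j, |u j - v j|)

/-- `Λ` is the (lower) tail copula of `C`: `Λ x = lim_{t ↓ 0} C (t x) / t` on `(0,∞)^d`. -/
def HasTailCopula (d : ℕ) (C : (Fin d → ℝ) → ℝ) (Λ : (Fin d → ℝ) → ℝ) : Prop :=
  ∀ x : Fin d → ℝ, (∀ j, 0 < x j) →
    Tendsto (fun t : ℝ => C (fun j => t * x j) / t) (nhdsWithin 0 (Set.Ioi 0)) (nhds (Λ x))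

/-!
A tail copula inherits from its copula the bounds `0 ≤ Λ x ≤ min_j x_j` and the ℓ¹-Lipschitz
property. On the compact truncation `K_c = {b ∈ B : min_j b_j ≥ c}` the `Λₙ` are therefore
equicontinuous, so pointwise convergence is uniform there and the suprema over `K_c` converge.
Off `K_c` every tail copula is at most `c`, so the suprema over `B` and over `K_c` differ by at
most `c`, which can be taken arbitrarily small.
-/

open Topology

theorem EquicontinuousOn.tendstoUniformlyOn_of_tendsto {ι X α : Type*} [TopologicalSpace X]
    [UniformSpace α] {l : Filter ι} {F : ι → X → α} {f : X → α} {K : Set X}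
    (hK : IsCompact K) (hF : EquicontinuousOn F K)
    (hFf : ∀ x ∈ K, Tendsto (F · x) l (𝓝 (f x))) :
    TendstoUniformlyOn F f l K := by
  have : CompactSpace K := isCompact_iff_compactSpace.mp hK
  have hpi : Tendsto (K.domRestrict ∘ F) l (𝓝 (K.domRestrict f)) :=
    tendsto_pi_nhds.2 fun x => hFf x x.2
  rw [tendstoUniformlyOn_iff_tendstoUniformly_comp_coe]
  exact UniformFun.tendsto_iff_tendstoUniformly.1
    ((((equicontinuous_restrict_iff F).2 hF).tendsto_uniformFun_iff_pi l _).2 hpi)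

theorem csSup_image_le_csSup_image_add {α : Type*} {s : Set α} {f g : α → ℝ} {ε : ℝ}
    (hs : s.Nonempty) (hg : BddAbove (g '' s)) (h : ∀ x ∈ s, f x ≤ g x + ε) :
    sSup (f '' s) ≤ sSup (g '' s) + ε :=
  csSup_le (hs.image f) <| forall_mem_image.2 fun x hx =>
    (h x hx).trans (add_le_add (le_csSup hg (mem_image_of_mem g hx)) le_rfl)

theorem dist_csSup_image_le {α : Type*} {s : Set α} {f g : α → ℝ} {ε : ℝ}
    (hs : s.Nonempty) (hf : BddAbove (f '' s)) (hg : BddAbove (g '' s))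
    (h : ∀ x ∈ s, dist (f x) (g x) ≤ ε) : dist (sSup (f '' s)) (sSup (g '' s)) ≤ ε := by
  rw [Real.dist_eq, abs_sub_le_iff, sub_le_iff_le_add', sub_le_iff_le_add']
  refine ⟨csSup_image_le_csSup_image_add hs hg fun x hx => ?_,
    csSup_image_le_csSup_image_add hs hf fun x hx => ?_⟩
  · linarith [(abs_sub_le_iff.1 (h x hx)).1]
  · linarith [(abs_sub_le_iff.1 (h x hx)).2]

theorem TendstoUniformlyOn.tendsto_csSup_image {ι α : Type*} {l : Filter ι} {F : ι → α → ℝ}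
    {f : α → ℝ} {s : Set α} (hFf : TendstoUniformlyOn F f l s) (hs : s.Nonempty)
    (hF : ∀ i, BddAbove (F i '' s)) (hf : BddAbove (f '' s)) :
    Tendsto (fun i => sSup (F i '' s)) l (𝓝 (sSup (f '' s))) := by
  refine Metric.tendsto_nhds.2 fun ε hε => ?_
  filter_upwards [Metric.tendstoUniformlyOn_iff.1 hFf (ε / 2) (half_pos hε)] with i hi
  calc dist (sSup (F i '' s)) (sSup (f '' s)) ≤ ε / 2 :=
        dist_csSup_image_le hs (hF i) hf fun x hx => (dist_comm (f x) _ ▸ hi x hx).le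
    _ < ε := half_lt_self hε

theorem dist_csSup_image_le_of_forall_notMem_le {α : Type*} {s t : Set α} {f : α → ℝ} {c : ℝ}
    (hst : s ⊆ t) (hs : s.Nonempty) (hf : BddAbove (f '' s)) (hf₀ : ∀ x ∈ s, 0 ≤ f x)
    (hc : 0 ≤ c) (hfc : ∀ x ∈ t, x ∉ s → f x ≤ c) :
    dist (sSup (f '' t)) (sSup (f '' s)) ≤ c := by
  have hsup₀ : 0 ≤ sSup (f '' s) :=
    hs.elim fun x₀ hx₀ => (hf₀ x₀ hx₀).trans (le_csSup hf (mem_image_of_mem f hx₀))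
  have hub : max (sSup (f '' s)) c ∈ upperBounds (f '' t) := by
    refine forall_mem_image.2 fun x hx => ?_
    by_cases hxs : x ∈ s
    · exact le_max_of_le_left (le_csSup hf (mem_image_of_mem f hxs))
    · exact le_max_of_le_right (hfc x hx hxs)
  have hst_sup : sSup (f '' s) ≤ sSup (f '' t) :=
    csSup_le_csSup ⟨_, hub⟩ (hs.image f) (image_mono hst)
  rw [Real.dist_eq, abs_of_nonneg (sub_nonneg.2 hst_sup)]
  linarith [csSup_le ((hs.mono hst).image f) hub, max_le_add_of_nonneg hsup₀ hc]

theorem isCompact_setOf_le_prod_eq_one {d : ℕ} {c : ℝ} (hc : 0 < c) :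
    IsCompact {b : Fin d → ℝ | (∀ j, c ≤ b j) ∧ ∏ j, b j = 1} := by
  refine (isCompact_Icc (a := fun _ => c) (b := fun _ => 1 / c ^ (d - 1))).of_isClosed_subset
    ((isClosed_le continuous_const continuous_id).inter
      (isClosed_eq (continuous_finsetProd _ fun j _ => continuous_apply j) continuous_const))
    fun b ⟨hcb, hprod⟩ => ⟨hcb, fun j => ?_⟩
  show b j ≤ 1 / c ^ (d - 1)
  have hpow : c ^ (d - 1) ≤ ∏ i ∈ Finset.univ.erase j, b i := by
    simpa [Finset.card_erase_of_mem] using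
      Finset.prod_le_prod (s := Finset.univ.erase j) (fun _ _ => hc.le) (fun i _ => hcb i)
  rw [le_div_iff₀ (by positivity), ← hprod,
    ← Finset.mul_prod_erase _ _ (Finset.mem_univ j)]
  exact mul_le_mul_of_nonneg_left hpow (hc.trans_le (hcb j)).le

theorem eventually_mul_mem_Icc {d : ℕ} {x : Fin d → ℝ} (hx : ∀ j, 0 ≤ x j) :
    ∀ᶠ t in 𝓝[>] (0 : ℝ), 0 < t ∧ ∀ j, t * x j ∈ Icc (0 : ℝ) 1 := by
  have hlt : ∀ j, ∀ᶠ t in 𝓝[>] (0 : ℝ), t * x j < 1 := fun j =>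
    (((continuous_mul_const (x j)).tendsto' 0 0 (zero_mul _)).mono_left
      nhdsWithin_le_nhds).eventually (gt_mem_nhds one_pos)
  filter_upwards [self_mem_nhdsWithin, eventually_all.2 hlt] with t ht hlt
  exact ⟨ht, fun j => ⟨mul_nonneg ht.le (hx j), (hlt j).le⟩⟩

namespace HasTailCopula

variable {d : ℕ} {C Λ : (Fin d → ℝ) → ℝ}

theorem nonneg (hC : IsCopula d C) (hΛ : HasTailCopula d C Λ) {x : Fin d → ℝ}
    (hx : ∀ j, 0 < x j) : 0 ≤ Λ x :=
  ge_of_tendsto (hΛ x hx) <| (eventually_mul_mem_Icc fun j => (hx j).le).mono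
    fun _ ⟨ht, hmem⟩ => div_nonneg (hC.1 _ hmem).1 ht.le

theorem le_apply (hC : IsCopula d C) (hΛ : HasTailCopula d C Λ) {x : Fin d → ℝ}
    (hx : ∀ j, 0 < x j) (j : Fin d) : Λ x ≤ x j := by
  obtain ⟨-, -, hmargin, hmono, -⟩ := hC
  refine le_of_tendsto (hΛ x hx) ?_
  filter_upwards [eventually_mul_mem_Icc fun j => (hx j).le] with t ⟨ht, hmem⟩
  have hv : ∀ i, (if i = j then t * x j else 1) ∈ Icc (0 : ℝ) 1 := fun i => by
    split_ifs
    exacts [hmem j, right_mem_Icc.2 zero_le_one]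
  have hle : C (fun i => t * x i) ≤ t * x j := by
    refine (hmono _ _ hmem hv fun i => ?_).trans_eq (hmargin j _ (hmem j))
    split_ifs with hij
    exacts [hij ▸ le_rfl, (hmem i).2]
  rwa [div_le_iff₀ ht, mul_comm]

theorem abs_sub_le_sum (hC : IsCopula d C) (hΛ : HasTailCopula d C Λ) {x y : Fin d → ℝ}
    (hx : ∀ j, 0 < x j) (hy : ∀ j, 0 < y j) : |Λ x - Λ y| ≤ ∑ j, |x j - y j| := by
  refine le_of_tendsto ((hΛ x hx).sub (hΛ y hy)).abs ?_
  filter_upwards [eventually_mul_mem_Icc fun j => (hx j).le,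
    eventually_mul_mem_Icc fun j => (hy j).le] with t ⟨ht, hmx⟩ ⟨_, hmy⟩
  have hscale : ∑ j, |t * x j - t * y j| = (∑ j, |x j - y j|) * t := by
    simp_rw [← mul_sub, abs_mul, abs_of_pos ht, ← Finset.mul_sum, mul_comm]
  rw [div_sub_div_same, abs_div, abs_of_pos ht, div_le_iff₀ ht, ← hscale]
  exact hC.2.2.2.2 _ _ hmx hmy

theorem lipschitzOnWith (hC : IsCopula d C) (hΛ : HasTailCopula d C Λ) :
    LipschitzOnWith d Λ {x | ∀ j, 0 < x j} :=
  LipschitzOnWith.of_dist_le_mul fun x hx y hy => by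
    calc dist (Λ x) (Λ y) ≤ ∑ j, |x j - y j| := hΛ.abs_sub_le_sum hC hx hy
      _ ≤ ∑ _j : Fin d, dist x y := Finset.sum_le_sum fun j _ => dist_le_pi_dist x y j
      _ = d * dist x y := by simp

theorem bddAbove_image (hC : IsCopula d C) (hΛ : HasTailCopula d C Λ) {K : Set (Fin d → ℝ)}
    (hK : IsCompact K) (hKpos : K ⊆ {x | ∀ j, 0 < x j}) : BddAbove (Λ '' K) :=
  hK.bddAbove_image ((hΛ.lipschitzOnWith hC).continuousOn.mono hKpos)

theorem dist_sSup_image_le (hC : IsCopula d C) (hΛ : HasTailCopula d C Λ) {c : ℝ} (hc₀ : 0 < c)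
    (hc₁ : c ≤ 1) :
    dist (sSup (Λ '' {b | (∀ j, 0 < b j) ∧ ∏ j, b j = 1}))
      (sSup (Λ '' {b | (∀ j, c ≤ b j) ∧ ∏ j, b j = 1})) ≤ c := by
  have hKpos : {b : Fin d → ℝ | (∀ j, c ≤ b j) ∧ ∏ j, b j = 1} ⊆ {x | ∀ j, 0 < x j} :=
    fun b hb j => hc₀.trans_le (hb.1 j)
  refine dist_csSup_image_le_of_forall_notMem_le (fun b hb => ⟨hKpos hb, hb.2⟩)
    ⟨1, fun _ => hc₁, by simp⟩ (hΛ.bddAbove_image hC (isCompact_setOf_le_prod_eq_one hc₀) hKpos)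
    (fun b hb => hΛ.nonneg hC (hKpos hb)) hc₀.le fun b hb hbK => ?_
  obtain ⟨j, hj⟩ : ∃ j, b j < c := by
    by_contra! h
    exact hbK ⟨h, hb.2⟩
  exact (hΛ.le_apply hC hb.1 j).trans hj.le

end HasTailCopula

/-- the MTCM is continuous with respect to pointwise convergence of
tail copulas. -/
theorem mtcm_continuity (d : ℕ)
    (Cn : ℕ → (Fin d → ℝ) → ℝ) (Λn : ℕ → (Fin d → ℝ) → ℝ)
    (C Λ : (Fin d → ℝ) → ℝ)
    (hCn : ∀ n, IsCopula d (Cn n)) (hC : IsCopula d C)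
    (hΛn : ∀ n, HasTailCopula d (Cn n) (Λn n)) (hΛ : HasTailCopula d C Λ)
    (B : Set (Fin d → ℝ)) (hB : B = {b | (∀ j, 0 < b j) ∧ ∏ j, b j = 1})
    (hpw : ∀ x : Fin d → ℝ, (∀ j, 0 < x j) →
      Filter.Tendsto (fun n => Λn n x) Filter.atTop (nhds (Λ x))) :
    Filter.Tendsto (fun n => sSup (Λn n '' B)) Filter.atTop (nhds (sSup (Λ '' B))) := by
  subst hB
  refine Metric.tendsto_atTop.2 fun ε hε => ?_
  set c := min (ε / 4) 1
  have hc₀ : 0 < c := by positivity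
  set K := {b : Fin d → ℝ | (∀ j, c ≤ b j) ∧ ∏ j, b j = 1}
  have hK : IsCompact K := isCompact_setOf_le_prod_eq_one hc₀
  have hKpos : K ⊆ {x | ∀ j, 0 < x j} := fun b hb j => hc₀.trans_le (hb.1 j)
  have hequi : EquicontinuousOn Λn K :=
    (LipschitzOnWith.uniformEquicontinuousOn Λn d fun n =>
      ((hΛn n).lipschitzOnWith (hCn n)).mono hKpos).equicontinuousOn
  have hunif : TendstoUniformlyOn Λn Λ atTop K :=
    hequi.tendstoUniformlyOn_of_tendsto hK fun x hx => hpw x (hKpos hx)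
  have hsupK : Tendsto (fun n => sSup (Λn n '' K)) atTop (𝓝 (sSup (Λ '' K))) :=
    hunif.tendsto_csSup_image ⟨1, fun _ => min_le_right _ _, by simp⟩
      (fun n => (hΛn n).bddAbove_image (hCn n) hK hKpos) (hΛ.bddAbove_image hC hK hKpos)
  obtain ⟨N, hN⟩ := Metric.tendsto_atTop.1 hsupK (ε / 4) (by positivity)
  refine ⟨N, fun n hn => ?_⟩
  calc _ ≤ dist (sSup (Λn n '' _)) (sSup (Λn n '' K)) + dist (sSup (Λn n '' K)) (sSup (Λ '' K))
        + dist (sSup (Λ '' K)) (sSup (Λ '' _)) := dist_triangle4 _ _ _ _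
    _ ≤ c + ε / 4 + c := by
      gcongr
      · exact (hΛn n).dist_sSup_image_le (hCn n) hc₀ (min_le_right _ _)
      · exact (hN n hn).le
      · rw [dist_comm]; exact hΛ.dist_sSup_image_le hC hc₀ (min_le_right _ _)
    _ < ε := by linarith [min_le_left (ε / 4) 1]
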